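/- arXiv:1112.4378 — 3 statements merged into one kernel-verified Lean document; each statement's English description precedes it below -/
import Mathlib

section
/- Let (X,ρ) be a metric space, let P be an abstract porosity on X, and let A ⊆ X be a set that is not σ-P-porous. Then the kernel K_P(A) (the set of all x ∈ A at which A is not σ-P-porous) is nonempty and closed in A (i.e., closed in the subspace topology of A). -/
open Metric Filter Set

/-- An abstract porosity on a metric space `X`: a relation between points and subsets
of `X` satisfying the axioms (A1), (A2), (A3). -/
structure AbstractPorosity (X : Type*) [MetricSpace X] where
  rel : X → Set X → Prop
  mono : ∀ (x : X) (A B : Set X), A ⊆ B → rel x B → rel x A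
  loc : ∀ (x : X) (A : Set X), rel x A ↔ ∃ r > 0, rel x (A ∩ Metric.ball x r)
  clos : ∀ (x : X) (A : Set X), rel x A ↔ rel x (closure A)

variable {X : Type*} [MetricSpace X]

/-- `A` is `P`-porous if `P(x,A)` holds at each point `x ∈ A`. -/
def AbstractPorosity.Porous (P : AbstractPorosity X) (A : Set X) : Prop :=
  ∀ x ∈ A, P.rel x A

/-- `A` is σ-`P`-porous if it is a countable union of `P`-porous sets. -/
def AbstractPorosity.SigmaPorous (P : AbstractPorosity X) (A : Set X) : Prop :=
  ∃ f : ℕ → Set X, (∀ n, P.Porous (f n)) ∧ A = ⋃ n, f n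

/-- `A` is σ-`P`-porous at `x` if some `A ∩ B(x,r)` (r>0) is σ-`P`-porous. -/
def AbstractPorosity.SigmaPorousAt (P : AbstractPorosity X) (A : Set X) (x : X) : Prop :=
  ∃ r > 0, P.SigmaPorous (A ∩ Metric.ball x r)

/-- The kernel `K_P(A)`: points of `A` at which `A` is not σ-`P`-porous. -/
def AbstractPorosity.kernel (P : AbstractPorosity X) (A : Set X) : Set X :=
  {x ∈ A | ¬ P.SigmaPorousAt A x}

/-!
Being σ-`P`-porous at a point is an open condition, so the kernel is relatively closed in `A`.
For nonemptiness one shows that a set which is σ-`P`-porous at each of its points is σ-`P`-porous.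
The balls witnessing local σ-porosity form an open cover; assigning each point to the first ball
(in a well-order) that contains it together with a `1 / (n + 1)`-ball, as in Stone's theorem,
refines the cover into countably many uniformly separated families. Axiom (A2) lets one glue
porous sets from a uniformly separated family, so each family contributes a σ-porous union.
-/

section SeparatedRefinement

variable {α ι : Type*} [PseudoMetricSpace α]

def separatedRefinement [LT ι] (s : ι → Set α) (n : ℕ) (i : ι) : Set α :=
  {x | (∀ j < i, x ∉ s j) ∧ ball x (1 / (n + 1)) ⊆ s i}

theorem separatedRefinement_subset [LT ι] (s : ι → Set α) (n : ℕ) (i : ι) :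
    separatedRefinement s n i ⊆ s i :=
  fun _ hx ↦ hx.2 (mem_ball_self Nat.one_div_pos_of_nat)

theorem iUnion_separatedRefinement [LT ι] [WellFoundedLT ι] {s : ι → Set α}
    (hs : ∀ i, IsOpen (s i)) : ⋃ n, ⋃ i, separatedRefinement s n i = ⋃ i, s i := by
  refine (iUnion_subset fun n ↦ iUnion_mono (separatedRefinement_subset s n)).antisymm ?_
  rintro x hx
  obtain ⟨i, hxi, hmin⟩ := wellFounded_lt.has_min {i | x ∈ s i} (mem_iUnion.mp hx)
  obtain ⟨ε, hε, hball⟩ := isOpen_iff.mp (hs i) x hxi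
  obtain ⟨n, hn⟩ := exists_nat_one_div_lt hε
  exact mem_iUnion₂.mpr ⟨n, i, fun j hj hxj ↦ hmin j hxj hj,
    (ball_subset_ball hn.le).trans hball⟩

theorem separatedRefinement_separated [LinearOrder ι] (s : ι → Set α) (n : ℕ) :
    Pairwise fun i j ↦ ∀ x ∈ separatedRefinement s n i, ∀ y ∈ separatedRefinement s n j,
      1 / (n + 1 : ℝ) ≤ dist x y := by
  suffices h : ∀ i j, i < j → ∀ x ∈ separatedRefinement s n i,
      ∀ y ∈ separatedRefinement s n j, 1 / (n + 1 : ℝ) ≤ dist x y by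
    intro i j hij x hx y hy
    rcases hij.lt_or_gt with hlt | hgt
    · exact h i j hlt x hx y hy
    · exact dist_comm x y ▸ h j i hgt y hy x hx
  intro i j hij x hx y hy
  by_contra! hxy
  exact hy.1 i hij (hx.2 (mem_ball'.mpr hxy))

theorem exists_separated_refinement (s : ι → Set α) (hs : ∀ i, IsOpen (s i)) :
    ∃ D : ℕ → ι → Set α, (∀ n i, D n i ⊆ s i) ∧ ⋃ n, ⋃ i, D n i = ⋃ i, s i ∧
      ∀ n, Pairwise fun i j ↦ ∀ x ∈ D n i, ∀ y ∈ D n j, 1 / (n + 1 : ℝ) ≤ dist x y := by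
  obtain ⟨_, _⟩ := exists_wellFoundedLT ι
  exact ⟨separatedRefinement s, separatedRefinement_subset s, iUnion_separatedRefinement hs,
    separatedRefinement_separated s⟩

end SeparatedRefinement

namespace AbstractPorosity

variable {P : AbstractPorosity X} {ι : Type*}

theorem Porous.iUnion_of_separated {F : ι → Set X} (hF : ∀ i, P.Porous (F i)) {ε : ℝ}
    (hε : 0 < ε) (hsep : Pairwise fun i j ↦ ∀ x ∈ F i, ∀ y ∈ F j, ε ≤ dist x y) :
    P.Porous (⋃ i, F i) := by
  intro x hx
  obtain ⟨i, hxi⟩ := mem_iUnion.mp hx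
  have hlocal : (⋃ j, F j) ∩ ball x ε ⊆ F i := by
    rintro y ⟨hy, hyx⟩
    obtain ⟨j, hyj⟩ := mem_iUnion.mp hy
    obtain rfl | hij := eq_or_ne i j
    · exact hyj
    · exact absurd (hsep hij x hxi y hyj) (not_le.mpr (mem_ball'.mp hyx))
  exact (P.loc x _).mpr ⟨ε, hε, P.mono x _ _ hlocal (hF i x hxi)⟩

theorem SigmaPorous.mono {A B : Set X} (hA : P.SigmaPorous A) (hBA : B ⊆ A) :
    P.SigmaPorous B := by
  obtain ⟨f, hf, rfl⟩ := hA
  refine ⟨fun n ↦ f n ∩ B, fun n x hx ↦ P.mono x _ _ inter_subset_left (hf n x hx.1), ?_⟩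
  rw [← iUnion_inter, inter_eq_right.mpr hBA]

theorem SigmaPorous.iUnion_nat {A : ℕ → Set X} (hA : ∀ n, P.SigmaPorous (A n)) :
    P.SigmaPorous (⋃ n, A n) := by
  choose f hf hA using hA
  refine ⟨fun k ↦ f k.unpair.1 k.unpair.2, fun k ↦ hf _ _, ?_⟩
  rw [iUnion_unpair, iUnion_congr hA]

theorem SigmaPorous.iUnion_of_separated {A : ι → Set X} (hA : ∀ i, P.SigmaPorous (A i))
    {ε : ℝ} (hε : 0 < ε) (hsep : Pairwise fun i j ↦ ∀ x ∈ A i, ∀ y ∈ A j, ε ≤ dist x y) :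
    P.SigmaPorous (⋃ i, A i) := by
  choose f hf hA using hA
  have hfA : ∀ i m, f i m ⊆ A i := fun i m ↦ (hA i).symm ▸ subset_iUnion (f i) m
  refine ⟨fun m ↦ ⋃ i, f i m, fun m ↦ Porous.iUnion_of_separated (fun i ↦ hf i m) hε ?_, ?_⟩
  · exact fun i j hij x hx y hy ↦ hsep hij x (hfA i m hx) y (hfA j m hy)
  · rw [iUnion_comm, iUnion_congr hA]

theorem sigmaPorous_of_forall_sigmaPorousAt {A : Set X} (h : ∀ x ∈ A, P.SigmaPorousAt A x) :
    P.SigmaPorous A := by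
  choose! r hr hσ using h
  obtain ⟨D, hDsub, hDcover, hDsep⟩ :=
    exists_separated_refinement (fun a : A ↦ ball (a : X) (r a)) fun _ ↦ isOpen_ball
  have hfamily : ∀ n, P.SigmaPorous (⋃ a : A, A ∩ D n a) := fun n ↦
    SigmaPorous.iUnion_of_separated
      (fun a ↦ (hσ a a.2).mono (inter_subset_inter_right A (hDsub n a)))
      Nat.one_div_pos_of_nat fun a b hab x hx y hy ↦ hDsep n hab x hx.2 y hy.2
  refine (SigmaPorous.iUnion_nat hfamily).mono fun x hx ↦ ?_
  have hxD : x ∈ ⋃ n, ⋃ a : A, D n a :=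
    hDcover ▸ mem_iUnion.mpr ⟨⟨x, hx⟩, mem_ball_self (hr x hx)⟩
  simp only [mem_iUnion] at hxD ⊢
  obtain ⟨n, a, hxa⟩ := hxD
  exact ⟨n, a, hx, hxa⟩

theorem isOpen_setOf_sigmaPorousAt (A : Set X) : IsOpen {x | P.SigmaPorousAt A x} := by
  refine isOpen_iff.mpr fun x ⟨r, hr, hσ⟩ ↦ ⟨r, hr, fun y hy ↦ ?_⟩
  refine ⟨r - dist y x, sub_pos.mpr hy, hσ.mono (inter_subset_inter_right A ?_)⟩
  exact ball_subset_ball' (by linarith)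

theorem kernel_nonempty {A : Set X} (hA : ¬ P.SigmaPorous A) : (P.kernel A).Nonempty := by
  by_contra hK
  exact hA (sigmaPorous_of_forall_sigmaPorousAt fun x hx ↦ not_not.mp fun hx' ↦ hK ⟨x, hx, hx'⟩)

theorem closure_kernel_inter_self (A : Set X) : closure (P.kernel A) ∩ A = P.kernel A := by
  have hclosed : IsClosed {x | ¬ P.SigmaPorousAt A x} :=
    (isOpen_setOf_sigmaPorousAt A).isClosed_compl
  refine subset_antisymm (fun x ⟨hxK, hxA⟩ ↦ ⟨hxA, ?_⟩) fun x hx ↦ ⟨subset_closure hx, hx.1⟩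
  exact hclosed.closure_subset_iff.mpr (fun _ hy ↦ hy.2) hxK

end AbstractPorosity

/-- If `A` is not σ-`P`-porous, its kernel `K_P(A)` is nonempty and closed in `A`. -/
theorem kernel_nonempty_and_closed_in {X : Type*} [MetricSpace X]
    (P : AbstractPorosity X) (A : Set X) (hA : ¬ P.SigmaPorous A) :
    (P.kernel A).Nonempty ∧ closure (P.kernel A) ∩ A = P.kernel A :=
  ⟨AbstractPorosity.kernel_nonempty hA, AbstractPorosity.closure_kernel_inter_self A⟩
end

section
/- Let I ⊆ ℕ be infinite and let J ⊆ ℕ be nonempty. Then M_I ∩ A_J is dense in A_J. -/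
open Metric Filter Set

/-- γ(x,R,M): the supremum of radii r>0 of open balls contained in B(x,R) \ M
(equal to 0 if no such ball exists, by `Real.sSup_empty`). -/
noncomputable def porGamma {X : Type*} [MetricSpace X] (x : X) (R : ℝ) (M : Set X) : ℝ :=
  sSup {r : ℝ | 0 < r ∧ ∃ z : X, Metric.ball z r ⊆ Metric.ball x R \ M}

/-- `M` is lower porous at `x`: liminf_{R→0+} 2γ(x,R,M)/R > 0. -/
def LowerPorousAt {X : Type*} [MetricSpace X] (M : Set X) (x : X) : Prop :=
  0 < Filter.liminf (fun R => 2 * porGamma x R M / R) (nhdsWithin 0 (Set.Ioi 0))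

/-- `M` is (upper) porous at `x`: limsup_{R→0+} 2γ(x,R,M)/R > 0. -/
def UpperPorousAt {X : Type*} [MetricSpace X] (M : Set X) (x : X) : Prop :=
  0 < Filter.limsup (fun R => 2 * porGamma x R M / R) (nhdsWithin 0 (Set.Ioi 0))

/-- A set is lower porous if it is lower porous at each of its points. -/
def LowerPorous {X : Type*} [MetricSpace X] (M : Set X) : Prop :=
  ∀ x ∈ M, LowerPorousAt M x

/-- A set is (upper) porous if it is porous at each of its points. -/
def UpperPorous {X : Type*} [MetricSpace X] (M : Set X) : Prop :=
  ∀ x ∈ M, UpperPorousAt M x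

/-- A set is σ-lower porous if it is a countable union of lower porous sets. -/
def SigmaLowerPorous {X : Type*} [MetricSpace X] (A : Set X) : Prop :=
  ∃ f : ℕ → Set X, (∀ n, LowerPorous (f n)) ∧ A = ⋃ n, f n

/-- A set is σ-(upper) porous if it is a countable union of porous sets. -/
def SigmaUpperPorous {X : Type*} [MetricSpace X] (A : Set X) : Prop :=
  ∃ f : ℕ → Set X, (∀ n, UpperPorous (f n)) ∧ A = ⋃ n, f n

/-- The open sets `D_n ⊆ (0,1)`; `D_0 = ∅` and for `n ≥ 1`,
`D_n = ⋃_{i=0}^{3^{n-1}-1} ((1+3i)/3^n, (2+3i)/3^n)`. -/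
noncomputable def Dset : ℕ → Set ℝ
  | 0 => ∅
  | (n + 1) =>
      ⋃ i ∈ Finset.range (3 ^ n),
        Set.Ioo ((1 + 3 * (i : ℝ)) / 3 ^ (n + 1)) ((2 + 3 * (i : ℝ)) / 3 ^ (n + 1))

/-- `M_n = ∂D_n`, the boundary of `D_n` in `ℝ`. -/
noncomputable def Mset (n : ℕ) : Set ℝ := frontier (Dset n)

/-- `D_I = ⋃_{n ∈ I} D_n`. -/
noncomputable def DsetI (I : Set ℕ) : Set ℝ := ⋃ n ∈ I, Dset n

/-- `M_I = ⋃_{n ∈ I} M_n`. -/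
noncomputable def MsetI (I : Set ℕ) : Set ℝ := ⋃ n ∈ I, Mset n

/-- `A_I = [0,1] \ D_I`. -/
noncomputable def AsetI (I : Set ℕ) : Set ℝ := Set.Icc 0 1 \ DsetI I

/-! Fix `n = k + 1 ∈ I` with `3⁻ᵏ < ε`. For `m ≤ k`, every component of `D_m` has endpoints on
the grid `3⁻ᵏ ℤ`, so it contains every open grid cell it meets; and a point `a / 3ⁿ` lies in no
`D_m` with `m ≥ n`. Hence if `x ∈ A_J` lies in the open cell `(j, j + 1) / 3ᵏ`, the endpoint
`(3j + 1) / 3ⁿ ∈ M_n` of that cell's middle third lies in `A_J` as well. If `x = j / 3ᵏ` is a grid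
point, one of `(3j ± 1) / 3ⁿ` works: otherwise `x` would be both a left endpoint `(3i + 1) / 3ᵃ`
of some `D_a` and a right endpoint `(3i' + 2) / 3ᵇ` of some `D_b`, which the powers of `3` in
`(3i + 1) 3ᵇ = (3i' + 2) 3ᵃ` forbid. -/

lemma isOpen_Dset (m : ℕ) : IsOpen (Dset m) := by
  cases m with
  | zero => exact isOpen_empty
  | succ k => exact isOpen_biUnion fun _ _ => isOpen_Ioo

lemma mem_Dset_iff {m : ℕ} {t : ℝ} :
    t ∈ Dset m ↔ ∃ i : ℤ, 0 ≤ i ∧ 3 * i + 1 < 3 ^ m ∧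
      3 * (i : ℝ) + 1 < 3 ^ m * t ∧ 3 ^ m * t < 3 * (i : ℝ) + 2 := by
  cases m with
  | zero =>
    simp only [Dset, mem_empty_iff_false, false_iff, not_exists, not_and]
    intro i h0 h1
    omega
  | succ k =>
    have h3 : (0 : ℝ) < 3 ^ (k + 1) := by positivity
    simp only [Dset, mem_iUnion, Finset.mem_range, mem_Ioo, exists_prop, div_lt_iff₀ h3,
      lt_div_iff₀ h3]
    constructor
    · rintro ⟨i, hi, h1, h2⟩
      refine ⟨i, i.cast_nonneg, ?_, by push_cast; linarith, by push_cast; linarith⟩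
      have : (i : ℤ) < 3 ^ k := by exact_mod_cast hi
      rw [pow_succ]
      omega
    · rintro ⟨i, h0, hi, h1, h2⟩
      lift i to ℕ using h0
      refine ⟨i, ?_, by push_cast at h1; linarith, by push_cast at h2; linarith⟩
      have : (3 * i + 1 : ℤ) < 3 ^ (k + 1) := hi
      rw [pow_succ] at this
      exact_mod_cast (by omega : (i : ℤ) < 3 ^ k)

lemma notMem_Dset_of_mul_eq_intCast {m : ℕ} {t : ℝ} {c : ℤ} (h : 3 ^ m * t = c) :
    t ∉ Dset m := by
  rw [mem_Dset_iff, h]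
  rintro ⟨i, -, -, h1, h2⟩
  have h1' : 3 * i + 1 < c := by exact_mod_cast h1
  have h2' : c < 3 * i + 2 := by exact_mod_cast h2
  omega

lemma intCast_div_pow_notMem_Dset {n m : ℕ} (hnm : n ≤ m) (a : ℤ) :
    (a : ℝ) / 3 ^ n ∉ Dset m := by
  obtain ⟨d, rfl⟩ := Nat.exists_eq_add_of_le hnm
  refine notMem_Dset_of_mul_eq_intCast (c := a * 3 ^ d) ?_
  push_cast
  field_simp
  ring

lemma intCast_div_pow_mem_Icc {n : ℕ} {a : ℤ} (h0 : 0 ≤ a) (h1 : a ≤ 3 ^ n) :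
    (a : ℝ) / 3 ^ n ∈ Icc 0 1 :=
  ⟨by positivity, (div_le_one (by positivity)).2 (by exact_mod_cast h1)⟩

lemma endpoints_mem_Mset {m : ℕ} {i : ℤ} (h0 : 0 ≤ i) (h1 : 3 * i + 1 < 3 ^ m) :
    ((3 * i + 1 : ℤ) : ℝ) / 3 ^ m ∈ Mset m ∧ ((3 * i + 2 : ℤ) : ℝ) / 3 ^ m ∈ Mset m := by
  have h3 : (0 : ℝ) < 3 ^ m := by positivity
  have hsub : Ioo (((3 * i + 1 : ℤ) : ℝ) / 3 ^ m) (((3 * i + 2 : ℤ) : ℝ) / 3 ^ m) ⊆ Dset m := by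
    rintro t ⟨ht1, ht2⟩
    rw [div_lt_iff₀ h3] at ht1
    rw [lt_div_iff₀ h3] at ht2
    push_cast at ht1 ht2
    exact mem_Dset_iff.2 ⟨i, h0, h1, by linarith, by linarith⟩
  have hlt : ((3 * i + 1 : ℤ) : ℝ) / 3 ^ m < ((3 * i + 2 : ℤ) : ℝ) / 3 ^ m := by
    gcongr
    push_cast
  have hcl := (closure_Ioo hlt.ne).symm ▸ closure_mono hsub
  rw [Mset, (isOpen_Dset m).frontier_eq]
  exact ⟨⟨hcl (left_mem_Icc.2 hlt.le), intCast_div_pow_notMem_Dset le_rfl _⟩,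
    ⟨hcl (right_mem_Icc.2 hlt.le), intCast_div_pow_notMem_Dset le_rfl _⟩⟩

lemma mem_AsetI_iff {J : Set ℕ} {x : ℝ} : x ∈ AsetI J ↔ x ∈ Icc 0 1 ∧ ∀ m ∈ J, x ∉ Dset m := by
  simp [AsetI, DsetI]

lemma eq_cell_endpoint_of_notMem_Dset {m k : ℕ} (hmk : m ≤ k) {j : ℤ} {y s : ℝ}
    (hy : y ∈ Dset m) (hyj : (j : ℝ) < 3 ^ k * y ∧ 3 ^ k * y < j + 1)
    (hs : s ∉ Dset m) (hsj : (j : ℝ) ≤ 3 ^ k * s ∧ 3 ^ k * s ≤ j + 1) :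
    (3 ^ k * s = j ∧ ∃ i : ℤ, 3 ^ m * s = 3 * i + 1) ∨
      (3 ^ k * s = j + 1 ∧ ∃ i : ℤ, 3 ^ m * s = 3 * i + 2) := by
  obtain ⟨i, hi0, hi1, hylo, hyhi⟩ := mem_Dset_iff.1 hy
  obtain ⟨d, rfl⟩ := Nat.exists_eq_add_of_le hmk
  have hP : (0 : ℝ) < 3 ^ d := by positivity
  have hscale : ∀ t : ℝ, (3 : ℝ) ^ (m + d) * t = 3 ^ d * (3 ^ m * t) := fun t => by ring
  simp only [hscale] at hyj hsj ⊢
  -- the component of `D_m` containing `y` has endpoints on the grid `3⁻ᵏ ℤ`, so it covers the cell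
  have hlo : (3 * i + 1) * 3 ^ d ≤ j := by
    have : (((3 * i + 1) * 3 ^ d : ℤ) : ℝ) < j + 1 := by push_cast; nlinarith
    have : (3 * i + 1) * 3 ^ d < j + 1 := by exact_mod_cast this
    omega
  have hhi : j + 1 ≤ (3 * i + 2) * 3 ^ d := by
    have : (j : ℝ) < (((3 * i + 2) * 3 ^ d : ℤ) : ℝ) := by push_cast; nlinarith
    have : j < (3 * i + 2) * 3 ^ d := by exact_mod_cast this
    omega
  have hlo' : (3 * (i : ℝ) + 1) * 3 ^ d ≤ j := by exact_mod_cast hlo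
  have hhi' : (j : ℝ) + 1 ≤ (3 * i + 2) * 3 ^ d := by exact_mod_cast hhi
  have hs1 : 3 * (i : ℝ) + 1 ≤ 3 ^ m * s := le_of_mul_le_mul_left (by linarith) hP
  have hs2 : 3 ^ m * s ≤ 3 * (i : ℝ) + 2 := le_of_mul_le_mul_left (by linarith) hP
  rcases hs1.eq_or_lt with h1 | h1
  · exact .inl ⟨by nlinarith, i, h1.symm⟩
  rcases hs2.eq_or_lt with h2 | h2
  · exact .inr ⟨by nlinarith, i, h2⟩
  exact absurd (mem_Dset_iff.2 ⟨i, hi0, hi1, h1, h2⟩) hs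

lemma three_pow_mul_ne_three_mul_add_two {x : ℝ} {a b : ℕ} {i i' : ℤ}
    (h : 3 ^ a * x = 3 * i + 1) : 3 ^ b * x ≠ 3 * i' + 2 := by
  intro h'
  have hZ : (3 * i + 1) * 3 ^ b = (3 * i' + 2) * 3 ^ a := by
    have : (3 * (i : ℝ) + 1) * 3 ^ b = (3 * i' + 2) * 3 ^ a := by rw [← h, ← h']; ring
    exact_mod_cast this
  rcases le_total a b with hab | hab
  · obtain ⟨d, rfl⟩ := Nat.exists_eq_add_of_le hab
    have hd : (3 * i + 1) * 3 ^ d = 3 * i' + 2 :=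
      mul_left_cancel₀ (pow_ne_zero a three_ne_zero) (by linear_combination hZ)
    cases d with
    | zero => omega
    | succ d => rw [pow_succ, ← mul_assoc] at hd; omega
  · obtain ⟨d, rfl⟩ := Nat.exists_eq_add_of_le hab
    have hd : 3 * i + 1 = (3 * i' + 2) * 3 ^ d :=
      mul_left_cancel₀ (pow_ne_zero b three_ne_zero) (by linear_combination hZ)
    cases d with
    | zero => omega
    | succ d => rw [pow_succ, ← mul_assoc] at hd; omega

lemma exists_succ_mem_inv_three_pow_lt {I : Set ℕ} (hI : I.Infinite) {ε : ℝ} (hε : 0 < ε) :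
    ∃ k, k + 1 ∈ I ∧ ((3 : ℝ) ^ k)⁻¹ < ε := by
  have hlim : Tendsto (fun k : ℕ => ((3 : ℝ) ^ k)⁻¹) atTop (nhds 0) := by
    simpa only [inv_pow] using
      tendsto_pow_atTop_nhds_zero_of_lt_one (r := (3 : ℝ)⁻¹) (by norm_num) (by norm_num)
  obtain ⟨K, hK⟩ := eventually_atTop.1 (hlim.eventually (gt_mem_nhds hε))
  obtain ⟨n, hnI, hn⟩ := hI.exists_gt K
  exact ⟨n - 1, by rwa [Nat.sub_add_cancel (by omega)], hK _ (by omega)⟩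

lemma dist_lt_inv_three_pow {x y : ℝ} {k : ℕ} (h : |3 ^ k * x - 3 ^ k * y| < 1) :
    dist x y < ((3 : ℝ) ^ k)⁻¹ := by
  rw [← mul_sub, abs_mul, abs_of_pos (by positivity)] at h
  rwa [Real.dist_eq, ← mul_one ((3 : ℝ) ^ k)⁻¹, lt_inv_mul_iff₀ (by positivity)]

lemma exists_right_neighbour {J : Set ℕ} {x : ℝ} (hx : x ∈ AsetI J) (k : ℕ) :
    (∃ y ∈ Mset (k + 1) ∩ AsetI J, dist x y < ((3 : ℝ) ^ k)⁻¹) ∨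
      (3 ^ k * x = ⌊(3 : ℝ) ^ k * x⌋ ∧ ∃ m : ℕ, ∃ i : ℤ, 3 ^ m * x = 3 * i + 1) := by
  obtain ⟨⟨hx0, hx1⟩, hxD⟩ := mem_AsetI_iff.1 hx
  rcases hx1.eq_or_lt with rfl | hx1
  · exact .inr ⟨by rw [mul_one, ← Nat.cast_ofNat, ← Nat.cast_pow, Int.floor_natCast]; simp,
      0, 0, by norm_num⟩
  refine or_iff_not_imp_right.2 fun hL => ?_
  set j := ⌊(3 : ℝ) ^ k * x⌋
  have hj0 : 0 ≤ j := Int.floor_nonneg.2 (by positivity)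
  have hjk : j < 3 ^ k :=
    Int.floor_lt.2 (by push_cast; nlinarith [pow_pos (three_pos : (0 : ℝ) < 3) k])
  have hxj : (j : ℝ) ≤ 3 ^ k * x ∧ 3 ^ k * x < j + 1 := ⟨Int.floor_le _, Int.lt_floor_add_one _⟩
  have hy : (3 : ℝ) ^ k * (((3 * j + 1 : ℤ) : ℝ) / 3 ^ (k + 1)) = j + 1 / 3 := by
    push_cast
    field_simp
    ring
  have h3k : (3 : ℤ) ^ (k + 1) = 3 * 3 ^ k := pow_succ' 3 k
  refine ⟨_, ⟨(endpoints_mem_Mset hj0 (by omega)).1, mem_AsetI_iff.2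
    ⟨intCast_div_pow_mem_Icc (by omega) (by omega), fun m hm => ?_⟩⟩, ?_⟩
  · rcases le_or_gt m k with hmk | hkm
    · intro hym
      rcases eq_cell_endpoint_of_notMem_Dset hmk hym (by rw [hy]; constructor <;> linarith)
        (hxD m hm) ⟨hxj.1, hxj.2.le⟩ with ⟨h, i, hi⟩ | ⟨h, -⟩
      · exact hL ⟨h, m, i, hi⟩
      · linarith
    · exact intCast_div_pow_notMem_Dset hkm _
  · exact dist_lt_inv_three_pow (by rw [hy, abs_lt]; constructor <;> linarith)

lemma exists_left_neighbour {J : Set ℕ} {x : ℝ} (hx : x ∈ AsetI J) {k : ℕ} {j : ℤ}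
    (hxj : 3 ^ k * x = j) (hx0 : 0 < x) :
    (∃ y ∈ Mset (k + 1) ∩ AsetI J, dist x y < ((3 : ℝ) ^ k)⁻¹) ∨
      ∃ m : ℕ, ∃ i : ℤ, 3 ^ m * x = 3 * i + 2 := by
  obtain ⟨⟨-, hx1⟩, hxD⟩ := mem_AsetI_iff.1 hx
  refine or_iff_not_imp_right.2 fun hR => ?_
  have hj1 : 1 ≤ j := by
    have : (0 : ℝ) < j := hxj ▸ by positivity
    exact_mod_cast this
  have hjk : j ≤ 3 ^ k := by
    have : (j : ℝ) ≤ ((3 ^ k : ℤ) : ℝ) := by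
      push_cast
      nlinarith [pow_pos (three_pos : (0 : ℝ) < 3) k]
    exact_mod_cast this
  have hy :
      (3 : ℝ) ^ k * (((3 * (j - 1) + 2 : ℤ) : ℝ) / 3 ^ (k + 1)) = (j - 1 : ℤ) + 2 / 3 := by
    push_cast
    field_simp
    ring
  have h3k : (3 : ℤ) ^ (k + 1) = 3 * 3 ^ k := pow_succ' 3 k
  refine ⟨_, ⟨(endpoints_mem_Mset (i := j - 1) (by omega) (by omega)).2, mem_AsetI_iff.2
    ⟨intCast_div_pow_mem_Icc (by omega) (by omega), fun m hm => ?_⟩⟩, ?_⟩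
  · rcases le_or_gt m k with hmk | hkm
    · intro hym
      rcases eq_cell_endpoint_of_notMem_Dset (j := j - 1) hmk hym
        (by rw [hy]; constructor <;> linarith) (hxD m hm)
        (by rw [hxj]; push_cast; constructor <;> linarith) with ⟨h, -⟩ | ⟨-, i, hi⟩
      · rw [hxj] at h; push_cast at h; linarith
      · exact hR ⟨m, i, hi⟩
    · exact intCast_div_pow_notMem_Dset hkm _
  · exact dist_lt_inv_three_pow (by rw [hy, hxj, abs_lt]; push_cast; constructor <;> linarith)

theorem MsetI_inter_AsetI_dense_general (I J : Set ℕ) (hI : I.Infinite) :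
    AsetI J ⊆ closure (MsetI I ∩ AsetI J) := by
  intro x hx
  rw [Metric.mem_closure_iff]
  intro ε hε
  obtain ⟨k, hkI, hkε⟩ := exists_succ_mem_inv_three_pow_lt hI hε
  suffices ∃ y ∈ Mset (k + 1) ∩ AsetI J, dist x y < ((3 : ℝ) ^ k)⁻¹ by
    obtain ⟨y, ⟨hyM, hyA⟩, hy⟩ := this
    exact ⟨y, ⟨mem_biUnion hkI hyM, hyA⟩, hy.trans hkε⟩
  rcases exists_right_neighbour hx k with hy | ⟨hxj, m, i, hL⟩
  · exact hy
  have hx0 : 0 < x := (mem_AsetI_iff.1 hx).1.1.lt_of_ne <| by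
    rintro rfl
    have : (0 : ℤ) = 3 * i + 1 := by exact_mod_cast (mul_zero _).symm.trans hL
    omega
  rcases exists_left_neighbour hx hxj hx0 with hy | ⟨m', i', hR⟩
  · exact hy
  · exact absurd hR (three_pow_mul_ne_three_mul_add_two hL)

/-- For infinite `I` and nonempty `J`, `M_I ∩ A_J` is dense in `A_J`. -/
theorem MsetI_inter_AsetI_dense (I J : Set ℕ) (hI : I.Infinite) (hJ : J.Nonempty) :
    AsetI J ⊆ closure (MsetI I ∩ AsetI J) :=
  MsetI_inter_AsetI_dense_general I J hI
end

section
/- Let I = ⋃_{i=1}^∞ ([i², i²+i) ∩ ℕ) and J = ℕ \ I. Then the sets A_I and A_J are closed subsets of ℝ, neither A_I nor A_J is σ-lower porous in ℝ, and the Cartesian product A_I × A_J is lower porous in ℝ² equipped with the maximum metric. -/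
open Metric Filter Set

/-- The index set `I = ⋃_{i≥1} [i², i²+i) ∩ ℕ`. -/
def Ispec : Set ℕ := {n | ∃ i : ℕ, 1 ≤ i ∧ i ^ 2 ≤ n ∧ n < i ^ 2 + i}

/-!
For every `K ⊆ ℕ` the product `A_K × A_{ℕ \ K}` is lower porous: at scale `R ≈ 3⁻ⁿ` the level `n`
lies in `K` or in its complement, so one factor has a hole of `D_n`, of length `3⁻ⁿ`, within
distance `2 · 3⁻ⁿ` of the point.

Both `Ispec` and its complement have arbitrarily long gaps `[p, p + L)`. Inside a triadic interval
of level `N < p` that avoids the holes of levels `≤ N`, every point of the grid `3^{-(p+L)} ℤ` in a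
window of length `2 · 3⁻ᵖ` lies in `A_K`, so at scale `3⁻ᵖ` the set `A_K` has no hole of relative
size `3⁻ᴸ`. By Baire's theorem in the closed set `A_K`, a decomposition into countably many lower
porous sets would contain a piece that is uniformly porous and dense in some portion of `A_K`,
which such windows rule out.
-/

open Topology

section Porosity

variable {X : Type*} [MetricSpace X]

lemma porGamma_nonneg (x : X) (R : ℝ) (M : Set X) : 0 ≤ porGamma x R M :=
  Real.sSup_nonneg fun _ hr => hr.1.le

lemma exists_ball_of_lt_porGamma {x : X} {R c : ℝ} {M : Set X} (hc : 0 ≤ c)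
    (h : c < porGamma x R M) : ∃ r > c, ∃ z, ball z r ⊆ ball x R \ M := by
  rcases eq_empty_or_nonempty {r : ℝ | 0 < r ∧ ∃ z : X, ball z r ⊆ ball x R \ M} with he | hne
  · rw [porGamma, he, Real.sSup_empty] at h
    exact absurd h hc.not_gt
  · obtain ⟨r, ⟨-, z, hz⟩, hcr⟩ := exists_lt_of_lt_csSup hne h
    exact ⟨r, hcr, z, hz⟩

lemma LowerPorousAt.exists_nat {M : Set X} {x : X} (h : LowerPorousAt M x) :
    ∃ m : ℕ, ∀ R ∈ Ioo 0 (1 / (m + 1) : ℝ), R / (m + 1) ≤ porGamma x R M := by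
  set ℓ := liminf (fun R => 2 * porGamma x R M / R) (𝓝[>] 0)
  have hℓ : 0 < ℓ := h
  have hbdd : IsBoundedUnder (· ≥ ·) (𝓝[>] (0 : ℝ)) (fun R => 2 * porGamma x R M / R) :=
    isBoundedUnder_of_eventually_ge <| eventually_mem_nhdsWithin.mono fun R hR =>
      div_nonneg (mul_nonneg zero_le_two (porGamma_nonneg x R M)) (le_of_lt hR)
  obtain ⟨δ, hδ, hδR⟩ :=
    (nhdsGT_basis (0 : ℝ)).eventually_iff.1 (eventually_lt_of_lt_liminf (half_lt_self hℓ) hbdd)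
  obtain ⟨m, hm⟩ := exists_nat_one_div_lt (lt_min hδ (by positivity : 0 < ℓ / 4))
  refine ⟨m, fun R hR => ?_⟩
  have hℓR : ℓ / 2 * R < 2 * porGamma x R M :=
    (lt_div_iff₀ hR.1).1 (hδR ⟨hR.1, hR.2.trans (hm.trans_le (min_le_left _ _))⟩)
  have hmℓ : 1 / ((m : ℝ) + 1) ≤ ℓ / 4 := hm.le.trans (min_le_right _ _)
  calc R / (m + 1) = 1 / ((m : ℝ) + 1) * R := by ring
    _ ≤ ℓ / 4 * R := by gcongr; exact hR.1.le
    _ ≤ porGamma x R M := by linarith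

lemma exists_inter_ball_subset_closure {ι : Type*} [Countable ι] {A : Set X} (hA : IsComplete A)
    (hne : A.Nonempty) {C : ι → Set X} (hC : A ⊆ ⋃ i, C i) :
    ∃ i, ∃ x₀ ∈ A, ∃ ε > 0, A ∩ ball x₀ ε ⊆ closure (C i) := by
  have := hA.completeSpace_coe
  have := hne.to_subtype
  have hcover : ⋃ i, ((↑) ⁻¹' closure (C i) : Set A) = univ :=
    eq_univ_of_forall fun x => mem_iUnion.2 <| (mem_iUnion.1 (hC x.2)).imp fun _ hx =>
      subset_closure hx
  obtain ⟨i, x₀, hx₀⟩ := nonempty_interior_of_iUnion_of_closed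
    (fun i => isClosed_closure.preimage continuous_subtype_val) hcover
  obtain ⟨ε, hε, hball⟩ := Metric.mem_nhds_iff.1 (mem_interior_iff_mem_nhds.1 hx₀)
  exact ⟨i, x₀, x₀.2, ε, hε, fun y ⟨hyA, hy⟩ => hball (show (⟨y, hyA⟩ : A) ∈ ball x₀ ε from hy)⟩

def NowhereUniformlyPorous (A : Set X) : Prop :=
  ∀ x₀ ∈ A, ∀ ε > 0, ∀ c > 0, ∃ t ∈ A, ∃ ρ ∈ Ioo 0 ε, ball t (2 * ρ) ⊆ ball x₀ ε ∧
    ∀ z r, c * ρ < r → ball z r ⊆ ball t (2 * ρ) → (ball z r ∩ A).Nonempty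

theorem NowhereUniformlyPorous.not_sigmaLowerPorous {A : Set X} (hA : NowhereUniformlyPorous A)
    (hc : IsComplete A) (hne : A.Nonempty) : ¬ SigmaLowerPorous A := by
  rintro ⟨f, hf, rfl⟩
  set B : ℕ × ℕ → Set X := fun km =>
    {x ∈ f km.1 | ∀ R ∈ Ioo 0 (1 / (km.2 + 1) : ℝ), R / (km.2 + 1) ≤ porGamma x R (f km.1)}
  have hcover : (⋃ n, f n) ⊆ ⋃ km, B km := by
    intro x hx
    obtain ⟨k, hk⟩ := mem_iUnion.1 hx
    obtain ⟨m, hm⟩ := (hf k x hk).exists_nat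
    exact mem_iUnion.2 ⟨(k, m), hk, hm⟩
  obtain ⟨⟨k, m⟩, x₀, hx₀, ε, hε, hsub⟩ := exists_inter_ball_subset_closure hc hne hcover
  obtain ⟨t, htA, ρ, hρ, htε, hdense⟩ :=
    hA x₀ hx₀ (min ε (1 / (m + 1))) (by positivity) (1 / (2 * (m + 1))) (by positivity)
  have hball : ball t (2 * ρ) ⊆ ball x₀ ε := htε.trans (ball_subset_ball (min_le_left _ _))
  obtain ⟨xb, hxbB, hxbt⟩ :=
    Metric.mem_closure_iff.1 (hsub ⟨htA, hball (mem_ball_self (by linarith [hρ.1]))⟩) ρ hρ.1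
  have hγ : 1 / (2 * (m + 1)) * ρ < porGamma xb ρ (f k) :=
    calc 1 / (2 * (m + 1)) * ρ < ρ / (m + 1) := by
          rw [div_mul_eq_mul_div, one_mul, div_lt_div_iff₀ (by positivity) (by positivity)]
          nlinarith [hρ.1]
      _ ≤ porGamma xb ρ (f k) := hxbB.2 ρ ⟨hρ.1, hρ.2.trans_le (min_le_right _ _)⟩
  obtain ⟨r, hr, z, hz⟩ := exists_ball_of_lt_porGamma (by positivity [hρ.1]) hγ
  have hzt : ball z r ⊆ ball t (2 * ρ) :=
    (hz.trans sdiff_subset).trans (ball_subset_ball' (by linarith [dist_comm t xb]))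
  obtain ⟨w, hwz, hwA⟩ := hdense z r hr hzt
  have hw : w ∈ closure (f k) := closure_mono (sep_subset _ _) (hsub ⟨hwA, hball (hzt hwz)⟩)
  obtain ⟨b, hbz, hb⟩ := mem_closure_iff.1 hw (ball z r) isOpen_ball hwz
  exact (hz hbz).2 hb

end Porosity

section Normed

variable {E : Type*} [NormedAddCommGroup E] [NormedSpace ℝ E] [Nontrivial E]

lemma le_of_ball_subset_ball {x z : E} {r R : ℝ} (hr : 0 < r) (h : ball z r ⊆ ball x R) :
    r ≤ R := by
  have hR : 0 ≤ R := (nonempty_ball.1 ((nonempty_ball.2 hr).mono h)).le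
  have := diam_mono h isBounded_ball
  rw [diam_ball_eq z hr.le, diam_ball_eq x hR] at this
  linarith

lemma porGamma_le {x : E} {R : ℝ} (hR : 0 ≤ R) (M : Set E) : porGamma x R M ≤ R :=
  Real.sSup_le (fun _ ⟨hr, _, hz⟩ => le_of_ball_subset_ball hr (hz.trans sdiff_subset)) hR

lemma le_porGamma {x z : E} {r R : ℝ} {M : Set E} (hr : 0 < r) (h : ball z r ⊆ ball x R \ M) :
    r ≤ porGamma x R M :=
  le_csSup ⟨R, fun _ ⟨hr', _, hz⟩ => le_of_ball_subset_ball hr' (hz.trans sdiff_subset)⟩ ⟨hr, z, h⟩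

lemma lowerPorousAt_of_eventually_le {M : Set E} {x : E} {c : ℝ} (hc : 0 < c)
    (h : ∀ᶠ R in 𝓝[>] 0, c * R ≤ porGamma x R M) : LowerPorousAt M x := by
  have hpos : ∀ᶠ R in 𝓝[>] (0 : ℝ), 0 < R := eventually_mem_nhdsWithin
  refine (mul_pos two_pos hc).trans_le (le_liminf_of_le ?_ ?_)
  · refine isCoboundedUnder_ge_of_eventually_le _ (x := 2) (hpos.mono fun R hR => ?_)
    rw [div_le_iff₀ hR]
    linarith [porGamma_le hR.le M (x := x)]
  · filter_upwards [h, hpos] with R hR hR0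
    rw [le_div_iff₀ hR0]
    linarith

end Normed

lemma isClosed_AsetI (K : Set ℕ) : IsClosed (AsetI K) := by
  refine isClosed_Icc.sdiff (isOpen_biUnion fun n _ => ?_)
  cases n with
  | zero => exact isOpen_empty
  | succ n => exact isOpen_biUnion fun _ _ => isOpen_Ioo

lemma mem_AsetI {K : Set ℕ} {x : ℝ} : x ∈ AsetI K ↔ x ∈ Icc 0 1 ∧ ∀ m ∈ K, x ∉ Dset m := by
  simp [AsetI, DsetI]

lemma mem_Dset_succ {x : ℝ} {n : ℕ} :
    x ∈ Dset (n + 1) ↔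
      ∃ i : ℕ, i < 3 ^ n ∧ 1 + 3 * (i : ℝ) < x * 3 ^ (n + 1) ∧ x * 3 ^ (n + 1) < 2 + 3 * i := by
  have h3 : (0 : ℝ) < 3 ^ (n + 1) := by positivity
  simp only [Dset, mem_iUnion, Finset.mem_range, mem_Ioo, exists_prop, div_lt_iff₀ h3,
    lt_div_iff₀ h3]

lemma mul_three_pow_eq_of_le {x : ℝ} {s m : ℕ} {j : ℤ} (h : x * 3 ^ s = j) (hsm : s ≤ m) :
    x * 3 ^ m = ((j * 3 ^ (m - s) : ℤ) : ℝ) := by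
  obtain ⟨d, rfl⟩ := Nat.exists_eq_add_of_le hsm
  rw [Nat.add_sub_cancel_left, pow_add, ← mul_assoc, h]
  push_cast
  ring

lemma notMem_Dset_of_mul_three_pow_eq {x : ℝ} {s m : ℕ} {j : ℤ} (h : x * 3 ^ s = j) (hsm : s ≤ m) :
    x ∉ Dset m := by
  cases m with
  | zero => simp [Dset]
  | succ n =>
    rw [mem_Dset_succ, mul_three_pow_eq_of_le h hsm]
    rintro ⟨i, -, h1, h2⟩
    have h1 : 1 + 3 * (i : ℤ) < j * 3 ^ (n + 1 - s) := by exact_mod_cast h1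
    have h2 : j * 3 ^ (n + 1 - s) < 2 + 3 * (i : ℤ) := by exact_mod_cast h2
    omega

lemma notMem_Dset_succ_of_mul_mem_Icc {x : ℝ} {n : ℕ} {j : ℤ} (hj : 3 ∣ j)
    (h : x * 3 ^ (n + 1) ∈ Icc (j : ℝ) (j + 1)) : x ∉ Dset (n + 1) := by
  rw [mem_Dset_succ]
  rintro ⟨i, -, h1, h2⟩
  have h1 : 1 + 3 * (i : ℤ) < j + 1 := by exact_mod_cast h1.trans_le h.2
  have h2 : j < 2 + 3 * (i : ℤ) := by exact_mod_cast h.1.trans_lt h2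
  omega

lemma one_add_three_mul_mul_pow_ne (i j a b : ℕ) : (1 + 3 * i) * 3 ^ a ≠ (2 + 3 * j) * 3 ^ b := by
  intro h
  have hv := congrArg (padicValNat 3) h
  rw [padicValNat.mul (by positivity) (by positivity),
    padicValNat.mul (by positivity) (by positivity), padicValNat.prime_pow, padicValNat.prime_pow,
    padicValNat.eq_zero_of_not_dvd (by omega),
    padicValNat.eq_zero_of_not_dvd (by omega), zero_add, zero_add] at hv
  subst hv
  have := Nat.eq_of_mul_eq_mul_right (by positivity) h
  omega

lemma eq_hole_endpoint {x₀ y : ℝ} {n N k : ℕ} (hnN : n + 1 ≤ N) (hx₀ : x₀ ∉ Dset (n + 1))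
    (hx₀k : x₀ * 3 ^ N ∈ Icc (k : ℝ) (k + 1)) (hy : y ∈ Dset (n + 1))
    (hyk : y * 3 ^ N ∈ Ioo (k : ℝ) (k + 1)) :
    ∃ i : ℕ, (x₀ * 3 ^ N = k ∧ x₀ * 3 ^ N = ((1 + 3 * i) * 3 ^ (N - (n + 1)) : ℕ)) ∨
      (x₀ * 3 ^ N = k + 1 ∧ x₀ * 3 ^ N = ((2 + 3 * i) * 3 ^ (N - (n + 1)) : ℕ)) := by
  obtain ⟨i, hi, h1, h2⟩ := mem_Dset_succ.1 hy
  set s := N - (n + 1)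
  have hN : ∀ w : ℝ, w * 3 ^ N = w * 3 ^ (n + 1) * 3 ^ s := fun w => by
    rw [mul_assoc, ← pow_add, Nat.add_sub_cancel' hnN]
  have hs : (0 : ℝ) < 3 ^ s := by positivity
  have ha : (((1 + 3 * i) * 3 ^ s : ℕ) : ℝ) < y * 3 ^ N := by
    rw [hN]; push_cast; exact mul_lt_mul_of_pos_right h1 hs
  have hb : y * 3 ^ N < (((2 + 3 * i) * 3 ^ s : ℕ) : ℝ) := by
    rw [hN]; push_cast; exact mul_lt_mul_of_pos_right h2 hs
  have hak : (1 + 3 * i) * 3 ^ s ≤ k := Nat.lt_succ_iff.1 (by exact_mod_cast ha.trans hyk.2)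
  have hkb : k + 1 ≤ (2 + 3 * i) * 3 ^ s := Nat.succ_le_of_lt (by exact_mod_cast hyk.1.trans hb)
  have hak' : (((1 + 3 * i) * 3 ^ s : ℕ) : ℝ) ≤ k := by exact_mod_cast hak
  have hkb' : (k : ℝ) + 1 ≤ (((2 + 3 * i) * 3 ^ s : ℕ) : ℝ) := by exact_mod_cast hkb
  refine ⟨i, ?_⟩
  rcases (hak'.trans hx₀k.1).eq_or_lt with hxa | hxa
  · exact .inl ⟨by linarith [hx₀k.1], hxa.symm⟩
  rcases (hx₀k.2.trans hkb').eq_or_lt with hxb | hxb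
  · exact .inr ⟨by linarith [hx₀k.2], hxb⟩
  refine absurd (mem_Dset_succ.2 ⟨i, hi, ?_, ?_⟩) hx₀
  · rw [hN] at hxa; push_cast at hxa; exact lt_of_mul_lt_mul_right hxa hs.le
  · rw [hN] at hxb; push_cast at hxb; exact lt_of_mul_lt_mul_right hxb hs.le

lemma exists_triadic_interval_disjoint {K : Set ℕ} {x₀ : ℝ} (hx₀ : x₀ ∈ AsetI K) (N : ℕ) :
    ∃ k : ℕ, k < 3 ^ N ∧ x₀ * 3 ^ N ∈ Icc (k : ℝ) (k + 1) ∧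
      ∀ m ∈ K, m ≤ N → ∀ y : ℝ, y * 3 ^ N ∈ Ioo (k : ℝ) (k + 1) → y ∉ Dset m := by
  obtain ⟨⟨hx₀0, hx₀1⟩, hx₀D⟩ := mem_AsetI.1 hx₀
  have h3N : (0 : ℝ) < 3 ^ N := by positivity
  have hx₀N : x₀ * 3 ^ N ≤ 3 ^ N := mul_le_of_le_one_left h3N.le hx₀1
  -- If `x₀` is a left endpoint of a hole of level `≤ N` (or `x₀ = 1`, the case `i = 0`, `e = N`),
  -- take the interval on its left, otherwise the one on its right: holes never share an endpoint.
  by_cases hleft : ∃ i e : ℕ, e ≤ N ∧ x₀ * 3 ^ N = ((1 + 3 * i) * 3 ^ e : ℕ)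
  · obtain ⟨i, e, -, he⟩ := hleft
    have hpos : 1 ≤ (1 + 3 * i) * 3 ^ e := Nat.one_le_iff_ne_zero.2 (by positivity)
    have hle : (1 + 3 * i) * 3 ^ e ≤ 3 ^ N := by exact_mod_cast he ▸ hx₀N
    have hcast : (((1 + 3 * i) * 3 ^ e - 1 : ℕ) : ℝ) + 1 = x₀ * 3 ^ N := by
      rw [he, Nat.cast_sub hpos]; ring
    refine ⟨(1 + 3 * i) * 3 ^ e - 1, by omega, ⟨by linarith, hcast.ge⟩, ?_⟩
    rintro (_ | n) hn hnN y hy hyD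
    · exact hyD
    obtain ⟨i', ⟨hk, -⟩ | ⟨-, hright⟩⟩ :=
      eq_hole_endpoint hnN (hx₀D _ hn) ⟨by linarith, hcast.ge⟩ hyD hy
    · linarith
    · exact one_add_three_mul_mul_pow_ne i i' e _ (by exact_mod_cast he.symm.trans hright)
  · push Not at hleft
    have hx₀lt : x₀ * 3 ^ N < 3 ^ N := hx₀N.lt_of_ne fun h => hleft 0 N le_rfl (by simpa using h)
    have hfloor := Nat.floor_le (mul_nonneg hx₀0 h3N.le)
    have hfloor' := Nat.lt_floor_add_one (x₀ * 3 ^ N)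
    refine ⟨⌊x₀ * 3 ^ N⌋₊, (Nat.floor_lt (by positivity)).2 (by exact_mod_cast hx₀lt),
      ⟨hfloor, hfloor'.le⟩, ?_⟩
    rintro (_ | n) hn hnN y hy hyD
    · exact hyD
    obtain ⟨i', ⟨-, hl⟩ | ⟨hk, -⟩⟩ :=
      eq_hole_endpoint hnN (hx₀D _ hn) ⟨hfloor, hfloor'.le⟩ hyD hy
    · exact hleft i' _ (Nat.sub_le _ _) hl
    · linarith

lemma mul_three_pow_mem_Ioo_of_lt {x u : ℝ} {a b : ℕ} (hab : a < b)
    (h : x * 3 ^ b ∈ Ioo (u * 3 ^ (b - a)) (u * 3 ^ (b - a) + 2)) : x * 3 ^ a ∈ Ioo u (u + 1) := by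
  rw [← Nat.add_sub_cancel' hab.le, pow_add, ← mul_assoc, Nat.add_sub_cancel_left] at h
  have h3 : (3 : ℝ) ≤ 3 ^ (b - a) := le_self_pow₀ (by norm_num) (by omega)
  refine ⟨lt_of_mul_lt_mul_right h.1 (by positivity), lt_of_mul_lt_mul_right ?_ (by positivity)⟩
  rw [add_one_mul]
  linarith [h.2]

lemma mem_AsetI_of_mul_three_pow_mem_Ioo {K : Set ℕ} {N p q k : ℕ} (hk : k < 3 ^ N)
    (hfree : ∀ m ∈ K, m ≤ N → ∀ y : ℝ, y * 3 ^ N ∈ Ioo (k : ℝ) (k + 1) → y ∉ Dset m)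
    (hNp : N < p) (hgap : ∀ m ∈ K, p ≤ m → q ≤ m) {x : ℝ}
    (hx : x * 3 ^ p ∈ Ioo ((k : ℝ) * 3 ^ (p - N)) (k * 3 ^ (p - N) + 2)) {j : ℤ}
    (hj : x * 3 ^ q = j) : x ∈ AsetI K := by
  have hxN := mul_three_pow_mem_Ioo_of_lt hNp hx
  have h3N : (0 : ℝ) < 3 ^ N := by positivity
  have hk' : (k : ℝ) + 1 ≤ 3 ^ N := by exact_mod_cast hk
  refine mem_AsetI.2 ⟨⟨(mul_nonneg_iff_of_pos_right h3N).1
    (by linarith [hxN.1, k.cast_nonneg (α := ℝ)]),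
    (mul_le_iff_le_one_left h3N).1 (by linarith [hxN.2])⟩, fun m hm => ?_⟩
  rcases le_or_gt m N with hmN | hNm
  · exact hfree m hm hmN x hxN
  rcases lt_or_ge m p with hmp | hpm
  · obtain ⟨n, rfl⟩ : ∃ n, m = n + 1 := ⟨m - 1, by omega⟩
    have hsplit : (k : ℝ) * 3 ^ (p - N) = k * 3 ^ (n + 1 - N) * 3 ^ (p - (n + 1)) := by
      rw [mul_assoc, ← pow_add]
      congr 2
      omega
    rw [hsplit] at hx
    have hxn := mul_three_pow_mem_Ioo_of_lt hmp hx
    refine notMem_Dset_succ_of_mul_mem_Icc (j := k * 3 ^ (n + 1 - N))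
      (Dvd.dvd.mul_left (dvd_pow_self 3 (by omega)) _) ?_
    push_cast
    exact ⟨hxn.1.le, hxn.2.le⟩
  · exact notMem_Dset_of_mul_three_pow_eq hj (hgap m hm hpm)

lemma exists_int_div_mem_ball {a r : ℝ} (ha : 0 < a) (hr : 1 / a < r) (z : ℝ) :
    ∃ j : ℤ, (j : ℝ) / a ∈ ball z r := by
  refine ⟨⌊z * a⌋, ?_⟩
  have hle : (⌊z * a⌋ : ℝ) / a ≤ z := (div_le_iff₀ ha).2 (Int.floor_le _)
  have hgt : z - 1 / a < (⌊z * a⌋ : ℝ) / a := by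
    rw [sub_lt_iff_lt_add, ← add_div, lt_div_iff₀ ha]
    exact Int.lt_floor_add_one _
  rw [mem_ball, Real.dist_eq, abs_sub_lt_iff]
  constructor <;> linarith

lemma mem_ball_div_iff {a v y : ℝ} (ha : 0 < a) :
    y ∈ ball (v / a) (1 / a) ↔ y * a ∈ Ioo (v - 1) (v + 1) := by
  rw [Real.ball_eq_Ioo, mem_Ioo, mem_Ioo, ← sub_div, ← add_div, div_lt_iff₀ ha, lt_div_iff₀ ha]

def HasLongGaps (K : Set ℕ) : Prop :=
  ∀ L, ∃ p, L ≤ p ∧ ∀ m ∈ K, p ≤ m → p + L ≤ m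

lemma hasLongGaps_Ispec : HasLongGaps Ispec := by
  intro L
  refine ⟨L ^ 2 + L, by nlinarith, ?_⟩
  rintro m ⟨i, -, hi, hmi⟩ hm
  rcases le_or_gt i L with h | h <;> nlinarith

lemma hasLongGaps_compl_Ispec : HasLongGaps Ispecᶜ := by
  intro L
  refine ⟨(L + 1) ^ 2, by nlinarith, fun m hm hLm => ?_⟩
  by_contra! h
  exact hm ⟨L + 1, by omega, hLm, by nlinarith⟩

theorem HasLongGaps.nowhereUniformlyPorous_AsetI {K : Set ℕ} (hK : HasLongGaps K) :
    NowhereUniformlyPorous (AsetI K) := by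
  intro x₀ hx₀ ε hε c hc
  obtain ⟨N, hN⟩ : ∃ N : ℕ, 1 / (3 : ℝ) ^ N < ε := by
    simpa [one_div_pow] using exists_pow_lt_of_lt_one hε (by norm_num : (1 / 3 : ℝ) < 1)
  obtain ⟨k, hk, hx₀k, hfree⟩ := exists_triadic_interval_disjoint hx₀ N
  obtain ⟨L, hL⟩ := pow_unbounded_of_one_lt (2 / c) (by norm_num : (1 : ℝ) < 3)
  obtain ⟨p, hp, hgap⟩ := hK (L + N + 1)
  set u : ℝ := k * 3 ^ (p - N)
  have h3p : (0 : ℝ) < 3 ^ p := by positivity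
  have hA : ∀ x : ℝ, x * 3 ^ p ∈ Ioo u (u + 2) → (∃ j : ℤ, x * 3 ^ (p + (L + N + 1)) = j) →
      x ∈ AsetI K := fun x hx ⟨j, hj⟩ =>
    mem_AsetI_of_mul_three_pow_mem_Ioo hk hfree (by omega) hgap hx hj
  have hball : ∀ y, y ∈ ball ((u + 1) / 3 ^ p) (1 / 3 ^ p) ↔ y * 3 ^ p ∈ Ioo u (u + 2) := by
    intro y
    rw [mem_ball_div_iff h3p, add_sub_cancel_right, add_assoc, one_add_one_eq_two]
  have h2ρ : 2 * (1 / (2 * 3 ^ p)) = 1 / (3 : ℝ) ^ p := by field_simp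
  refine ⟨(u + 1) / 3 ^ p, ?_, 1 / (2 * 3 ^ p), ⟨by positivity, ?_⟩, ?_, ?_⟩ <;> try rw [h2ρ]
  · refine hA _ ((hball _).1 (mem_ball_self (by positivity))) ⟨_, mul_three_pow_eq_of_le
      (j := k * 3 ^ (p - N) + 1) ?_ (Nat.le_add_right p (L + N + 1))⟩
    rw [div_mul_cancel₀ _ h3p.ne']
    push_cast
    rfl
  · refine lt_of_le_of_lt (one_div_le_one_div_of_le (by positivity) ?_) hN
    have : (3 : ℝ) ^ N ≤ 3 ^ p := pow_le_pow_right₀ (by norm_num) (by omega)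
    linarith
  · intro y hy
    have hyN := mul_three_pow_mem_Ioo_of_lt (by omega : N < p) ((hball y).1 hy)
    have h3N : (0 : ℝ) < 3 ^ N := by positivity
    have hclose : |y - x₀| < 1 / 3 ^ N := by
      rw [abs_sub_lt_iff, lt_div_iff₀ h3N, lt_div_iff₀ h3N]
      constructor <;> linarith [hyN.1, hyN.2, hx₀k.1, hx₀k.2]
    rw [mem_ball, Real.dist_eq]
    exact hclose.trans hN
  · intro z r hr hzr
    have hfine : 1 / (3 : ℝ) ^ (p + (L + N + 1)) < r := by
      have hLc : 1 / (3 : ℝ) ^ (L + N + 1) < c / 2 := by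
        have : (3 : ℝ) ^ L ≤ 3 ^ (L + N + 1) := pow_le_pow_right₀ (by norm_num) (by omega)
        rw [div_lt_div_iff₀ (by positivity) two_pos]
        rw [div_lt_iff₀ hc] at hL
        linarith [mul_le_mul_of_nonneg_left this hc.le]
      calc 1 / (3 : ℝ) ^ (p + (L + N + 1)) = 1 / 3 ^ p * (1 / 3 ^ (L + N + 1)) := by
            rw [pow_add]; field_simp
        _ < 1 / 3 ^ p * (c / 2) := by gcongr
        _ = c * (1 / (2 * 3 ^ p)) := by field_simp
        _ < r := hr
    obtain ⟨j, hj⟩ := exists_int_div_mem_ball (by positivity) hfine z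
    exact ⟨_, hj, hA _ ((hball _).1 (hzr hj)) ⟨j, div_mul_cancel₀ _ (by positivity)⟩⟩

lemma exists_ball_subset_ball_inter_Dset {w : ℝ} (hw : w ∈ Icc 0 1) (n : ℕ) :
    ∃ v, ball v (1 / (2 * 3 ^ (n + 1))) ⊆ ball w (2 / 3 ^ (n + 1)) ∩ Dset (n + 1) := by
  set i := min ⌊w * 3 ^ n⌋₊ (3 ^ n - 1)
  have hwn : 0 ≤ w * 3 ^ n := mul_nonneg hw.1 (by positivity)
  have hi : i < 3 ^ n := (min_le_right _ _).trans_lt (Nat.sub_lt (by positivity) one_pos)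
  have hiw : (i : ℝ) ≤ w * 3 ^ n := (Nat.cast_le.2 (min_le_left _ _)).trans (Nat.floor_le hwn)
  have hwi : w * 3 ^ n ≤ i + 1 := by
    obtain h | h : i = ⌊w * 3 ^ n⌋₊ ∨ i = 3 ^ n - 1 := min_choice _ _
    · exact (h ▸ Nat.lt_floor_add_one _).le
    · rw [h, Nat.cast_sub (Nat.one_le_pow _ _ (by norm_num))]
      push_cast
      linarith [mul_le_of_le_one_left (by positivity : (0 : ℝ) ≤ 3 ^ n) hw.2]
  have h3 : (0 : ℝ) < 3 ^ (n + 1) := by positivity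
  refine ⟨(3 * i + 3 / 2) / 3 ^ (n + 1), fun y hy => ?_⟩
  rw [mem_ball, Real.dist_eq, abs_sub_lt_iff] at hy
  have hv : (3 * i + 3 / 2) / 3 ^ (n + 1) * (3 : ℝ) ^ (n + 1) = 3 * i + 3 / 2 := by field_simp
  have hr : 1 / (2 * 3 ^ (n + 1)) * (3 : ℝ) ^ (n + 1) = 1 / 2 := by field_simp
  have h1 := mul_lt_mul_of_pos_right hy.1 h3
  have h2 := mul_lt_mul_of_pos_right hy.2 h3
  rw [sub_mul, hv, hr] at h1 h2
  have hw3 : w * 3 ^ (n + 1) = 3 * (w * 3 ^ n) := by ring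
  refine ⟨?_, mem_Dset_succ.2 ⟨i, hi, by linarith, by linarith⟩⟩
  rw [mem_ball, Real.dist_eq, abs_sub_lt_iff, lt_div_iff₀ h3, lt_div_iff₀ h3]
  constructor <;> linarith

lemma porGamma_prod_AsetI_ge {K : Set ℕ} {x y R : ℝ} (hx : x ∈ AsetI K) (hy : y ∈ AsetI Kᶜ)
    {n : ℕ} (hR : 2 / 3 ^ (n + 1) ≤ R) :
    1 / (2 * 3 ^ (n + 1)) ≤ porGamma (x, y) R (AsetI K ×ˢ AsetI Kᶜ) := by
  have hδ : 1 / (2 * 3 ^ (n + 1)) ≤ R := by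
    refine le_trans ?_ hR
    rw [div_le_div_iff₀ (by positivity) (by positivity)]
    nlinarith [pow_pos (by norm_num : (0 : ℝ) < 3) (n + 1)]
  have hnot : ∀ {K' : Set ℕ}, n + 1 ∈ K' → ∀ w ∈ Dset (n + 1), w ∉ AsetI K' :=
    fun hK' w hw hA => (mem_AsetI.1 hA).2 _ hK' hw
  by_cases hn : n + 1 ∈ K
  · obtain ⟨v, hv⟩ := exists_ball_subset_ball_inter_Dset hx.1 n
    refine le_porGamma (z := (v, y)) (by positivity) ?_
    rw [← ball_prod_same, ← ball_prod_same]
    rintro ⟨a, b⟩ ⟨ha, hb⟩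
    exact ⟨⟨ball_subset_ball hR (hv ha).1, ball_subset_ball hδ hb⟩,
      fun hab => hnot hn a (hv ha).2 hab.1⟩
  · obtain ⟨v, hv⟩ := exists_ball_subset_ball_inter_Dset hy.1 n
    refine le_porGamma (z := (x, v)) (by positivity) ?_
    rw [← ball_prod_same, ← ball_prod_same]
    rintro ⟨a, b⟩ ⟨ha, hb⟩
    exact ⟨⟨ball_subset_ball hδ ha, ball_subset_ball hR (hv hb).1⟩,
      fun hab => hnot (K' := Kᶜ) hn b (hv hb).2 hab.2⟩

lemma lowerPorous_AsetI_prod_compl (K : Set ℕ) : LowerPorous (AsetI K ×ˢ AsetI Kᶜ) := by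
  rintro ⟨x, y⟩ ⟨hx, hy⟩
  refine lowerPorousAt_of_eventually_le (c := 1 / 12) (by norm_num) ?_
  filter_upwards [Ioo_mem_nhdsGT (by norm_num : (0 : ℝ) < 2)] with R hR
  obtain ⟨n, hn1, hn2⟩ := exists_nat_pow_near (x := 2 / R) (y := 3)
    (by rw [le_div_iff₀ hR.1]; linarith [hR.2]) (by norm_num)
  rw [le_div_iff₀ hR.1] at hn1
  rw [div_lt_iff₀ hR.1] at hn2
  refine le_trans ?_ (porGamma_prod_AsetI_ge hx hy (n := n) ?_)
  · rw [le_div_iff₀ (by positivity), pow_succ]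
    nlinarith
  · rw [div_le_iff₀ (by positivity)]
    linarith

lemma AsetI_nonempty (K : Set ℕ) : (AsetI K).Nonempty :=
  ⟨0, mem_AsetI.2 ⟨⟨le_rfl, zero_le_one⟩, fun m _ =>
    notMem_Dset_of_mul_three_pow_eq (s := 0) (j := 0) (by simp) m.zero_le⟩⟩

/-- For `I = ⋃_{i≥1} [i², i²+i) ∩ ℕ` and `J = ℕ \ I`, the sets `A_I, A_J` are closed,
neither is σ-lower porous, yet `A_I × A_J` is lower porous in `ℝ²` with the maximum
metric. -/
theorem AsetI_Ispec_counterexample :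
    IsClosed (AsetI Ispec) ∧ IsClosed (AsetI Ispecᶜ) ∧
    ¬ SigmaLowerPorous (AsetI Ispec) ∧ ¬ SigmaLowerPorous (AsetI Ispecᶜ) ∧
    LowerPorous (AsetI Ispec ×ˢ AsetI Ispecᶜ) :=
  ⟨isClosed_AsetI _, isClosed_AsetI _,
    hasLongGaps_Ispec.nowhereUniformlyPorous_AsetI.not_sigmaLowerPorous
      (isClosed_AsetI _).isComplete (AsetI_nonempty _),
    hasLongGaps_compl_Ispec.nowhereUniformlyPorous_AsetI.not_sigmaLowerPorous
      (isClosed_AsetI _).isComplete (AsetI_nonempty _),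
    lowerPorous_AsetI_prod_compl Ispec⟩
end
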